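/- arXiv:1310.5295 — 4 statements merged into one kernel-verified Lean document; each statement's English description precedes it below -/
import Mathlib

section
/- Let $r \geq 2$ and let $n_1 \geq 2$, $n_2 \geq 2$ be natural numbers with $n_2$ even. Let $a_1, b_1 \geq 0$ with $a_1 + b_1 = n_1$ and $a_2, b_2 \geq 1$ both odd with $a_2 + b_2 = n_2$, and assume $a_1 + a_2 \geq 2$ and $b_1 + b_2 \geq 2$. Then $$\frac{a_1 b_1}{n_1 - 1}\left(\frac{1}{2} - \frac{1}{n_1}\right) + \frac{a_1 b_2 + a_2 b_1}{n_1 n_2} + \frac{a_2 b_2}{n_2 - 1}\left(\frac{2r+1}{16} - \frac{1}{n_2}\right) \;\geq\; \frac{2r+1}{16}.$$ -/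
/-!
Write `n₁ = a₁ + b₁`, `n₂ = a₂ + b₂`, `c = (2r + 1)/16`, `m = min a₂ b₂`, `M = max a₂ b₂`.
The first term is nonnegative because `n₁ ≥ 2`. Since `a₁b₂ + a₂b₁ ≥ n₁ m`, the cross term
is at least `m / n₂`, and `m / n₂` plus the last term exceeds `c` by
`(m (m - 1) + c n₂ (m - 1) (M - 1)) / (n₂ (n₂ - 1)) ≥ 0`.
-/

section

variable {K : Type*} [Field K] [LinearOrder K] [IsStrictOrderedRing K]

lemma mul_div_sub_one_mul_half_sub_inv_nonneg {a b : K} (ha : 0 ≤ a) (hb : 0 ≤ b)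
    (hab : 2 ≤ a + b) : 0 ≤ a * b / (a + b - 1) * (1 / 2 - 1 / (a + b)) := by
  have hinv : 1 / (a + b) ≤ 1 / 2 := one_div_le_one_div_of_le two_pos hab
  exact mul_nonneg (div_nonneg (mul_nonneg ha hb) (by linarith)) (sub_nonneg.2 hinv)

lemma min_div_add_le_cross_div {a₁ b₁ a₂ b₂ : K} (ha₁ : 0 ≤ a₁) (hb₁ : 0 ≤ b₁)
    (hn₁ : 0 < a₁ + b₁) (hn₂ : 0 < a₂ + b₂) :
    min a₂ b₂ / (a₂ + b₂) ≤ (a₁ * b₂ + a₂ * b₁) / ((a₁ + b₁) * (a₂ + b₂)) := by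
  have hcross : (a₁ + b₁) * min a₂ b₂ ≤ a₁ * b₂ + a₂ * b₁ := by
    have h₁ : a₁ * min a₂ b₂ ≤ a₁ * b₂ := mul_le_mul_of_nonneg_left (min_le_right _ _) ha₁
    have h₂ : b₁ * min a₂ b₂ ≤ b₁ * a₂ := mul_le_mul_of_nonneg_left (min_le_left _ _) hb₁
    linarith
  rw [mul_comm, ← div_div, div_le_div_iff_of_pos_right hn₂, le_div_iff₀ hn₁]
  linarith

lemma le_div_add_mul_div_sub_one_mul_sub_inv {m M c : K} (hm : 1 ≤ m) (hM : 1 ≤ M)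
    (hc : 0 ≤ c) : c ≤ m / (m + M) + m * M / (m + M - 1) * (c - 1 / (m + M)) := by
  have hn : 0 < m + M := by linarith
  have hn' : 0 < m + M - 1 := by linarith
  have hdefect : m / (m + M) + m * M / (m + M - 1) * (c - 1 / (m + M)) - c
      = (m * (m - 1) + c * (m + M) * (m - 1) * (M - 1)) / ((m + M - 1) * (m + M)) := by
    field_simp
    ring
  rw [← sub_nonneg, hdefect]
  have hm' : 0 ≤ m - 1 := sub_nonneg.2 hm
  have hM' : 0 ≤ M - 1 := sub_nonneg.2 hM
  positivity

end

theorem stmt_2_general (r n1 n2 a1 b1 a2 b2 : ℕ) (h1 : 2 ≤ n1)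
    (hab1 : a1 + b1 = n1) (ha2 : 1 ≤ a2) (hb2 : 1 ≤ b2)
    (hab2 : a2 + b2 = n2) :
    ((a1 : ℚ) * (b1 : ℚ)) / ((n1 : ℚ) - 1) * (1 / 2 - 1 / (n1 : ℚ))
      + ((a1 : ℚ) * (b2 : ℚ) + (a2 : ℚ) * (b1 : ℚ)) / ((n1 : ℚ) * (n2 : ℚ))
      + ((a2 : ℚ) * (b2 : ℚ)) / ((n2 : ℚ) - 1) * ((2 * (r : ℚ) + 1) / 16 - 1 / (n2 : ℚ))
      ≥ (2 * (r : ℚ) + 1) / 16 := by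
  subst hab1 hab2
  push_cast
  have hn1 : (2 : ℚ) ≤ a1 + b1 := by exact_mod_cast h1
  have ha2' : (1 : ℚ) ≤ a2 := by exact_mod_cast ha2
  have hb2' : (1 : ℚ) ≤ b2 := by exact_mod_cast hb2
  have hfirst := mul_div_sub_one_mul_half_sub_inv_nonneg (Nat.cast_nonneg' a1)
    (Nat.cast_nonneg' b1) hn1
  have hcross := min_div_add_le_cross_div (Nat.cast_nonneg' a1) (Nat.cast_nonneg' b1)
    (by linarith) (by linarith : (0 : ℚ) < a2 + b2)
  have hself := le_div_add_mul_div_sub_one_mul_sub_inv (le_min ha2' hb2')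
    (le_max_of_le_left ha2' : (1 : ℚ) ≤ max (a2 : ℚ) b2)
    (by positivity : (0 : ℚ) ≤ (2 * r + 1) / 16)
  rw [min_add_max, min_mul_max] at hself
  linarith

theorem stmt_2 (r n1 n2 a1 b1 a2 b2 : ℕ) (hr : 2 ≤ r) (h1 : 2 ≤ n1) (h2 : 2 ≤ n2)
    (hev : Even n2)
    (hab1 : a1 + b1 = n1) (ha2 : 1 ≤ a2) (hb2 : 1 ≤ b2)
    (hoa : Odd a2) (hob : Odd b2) (hab2 : a2 + b2 = n2)
    (hI : 2 ≤ a1 + a2) (hJ : 2 ≤ b1 + b2) :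
    ((a1 : ℚ) * (b1 : ℚ)) / ((n1 : ℚ) - 1) * (1 / 2 - 1 / (n1 : ℚ))
      + ((a1 : ℚ) * (b2 : ℚ) + (a2 : ℚ) * (b1 : ℚ)) / ((n1 : ℚ) * (n2 : ℚ))
      + ((a2 : ℚ) * (b2 : ℚ)) / ((n2 : ℚ) - 1) * ((2 * (r : ℚ) + 1) / 16 - 1 / (n2 : ℚ))
      ≥ (2 * (r : ℚ) + 1) / 16 :=
  stmt_2_general r n1 n2 a1 b1 a2 b2 h1 hab1 ha2 hb2 hab2
end

section
/- Let $r \geq 2$ and let $n_1 \geq 2$, $n_2 \geq 2$ be natural numbers with $n_2$ even. Let $a_1, b_1 \geq 0$ with $a_1 + b_1 = n_1$ and $a_2, b_2 \geq 0$ both even with $a_2 + b_2 = n_2$, and assume $a_1 + a_2 \geq 2$ and $b_1 + b_2 \geq 2$. Then $$\frac{a_1 b_1}{n_1 - 1}\left(\frac{1}{2} - \frac{1}{n_1}\right) + \frac{a_1 b_2 + a_2 b_1}{n_1 n_2} + \frac{a_2 b_2}{n_2 - 1}\left(\frac{2r+1}{16} - \frac{1}{n_2}\right) \;\geq\; \frac{1}{4}.$$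 -/
/-!
The flow is symmetric under exchanging the two sides of the partition. If one side carries no
`ω_r` label, the middle term equals the share `a₁ / n₁` of `ω_1` labels on that side, and since
`a₁ ≥ 2` the first term makes up the difference to `1/4`. Otherwise both sides carry at least
two `ω_r` labels (the counts are even), so `a₁ b₂ + a₂ b₁ ≥ 2 n₁` and `a₂ b₂ ≥ 2 (n₂ - 2)`, and
the middle and last terms alone reach `1/4` as soon as `Δ_{ω_r} ≥ 1/4`, i.e. `r ≥ 2`.
-/

section PartitionFlow

variable {K : Type*} [Field K] [LinearOrder K] [IsStrictOrderedRing K]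

/-- `a₁, b₁` count the `ω_1` labels on the two sides, `a₂, b₂` the `ω_r` labels, and `c`
stands for `Δ_{ω_r}`. -/
def partitionFlow (c a₁ b₁ a₂ b₂ : K) : K :=
  a₁ * b₁ / (a₁ + b₁ - 1) * (1 / 2 - 1 / (a₁ + b₁))
    + (a₁ * b₂ + a₂ * b₁) / ((a₁ + b₁) * (a₂ + b₂))
    + a₂ * b₂ / (a₂ + b₂ - 1) * (c - 1 / (a₂ + b₂))

theorem partitionFlow_swap (c a₁ b₁ a₂ b₂ : K) :
    partitionFlow c b₁ a₁ b₂ a₂ = partitionFlow c a₁ b₁ a₂ b₂ := by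
  unfold partitionFlow
  ring

theorem mul_sub_one_le_of_two_le {a b : K} (ha : 2 ≤ a) (hb : 0 ≤ b) :
    (a + b) * (a + b - 1) ≤ 2 * a * b * (a + b - 2) + 4 * a * (a + b - 1) := by
  nlinarith [mul_nonneg (sub_nonneg.2 ha) (mul_nonneg hb (by linarith : (0 : K) ≤ a + b - 2))]

theorem quarter_le_partitionFlow_of_left_eq_zero {c a₁ b₁ b₂ : K} (ha₁ : 2 ≤ a₁) (hb₁ : 0 ≤ b₁)
    (hb₂ : 0 < b₂) : 1 / 4 ≤ partitionFlow c a₁ b₁ 0 b₂ := by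
  have hn : 0 < a₁ + b₁ := by linarith
  have hn' : 0 < a₁ + b₁ - 1 := by linarith
  have hflow : partitionFlow c a₁ b₁ 0 b₂
      = (2 * a₁ * b₁ * (a₁ + b₁ - 2) + 4 * a₁ * (a₁ + b₁ - 1)) / (4 * (a₁ + b₁) * (a₁ + b₁ - 1)) := by
    unfold partitionFlow
    field_simp
    ring
  rw [hflow, le_div_iff₀ (by positivity)]
  linarith [mul_sub_one_le_of_two_le ha₁ hb₁]

theorem quarter_le_partitionFlow_of_two_le {c a₁ b₁ a₂ b₂ : K} (hc : 1 / 4 ≤ c) (ha₁ : 0 ≤ a₁)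
    (hb₁ : 0 ≤ b₁) (hn₁ : 2 ≤ a₁ + b₁) (ha₂ : 2 ≤ a₂) (hb₂ : 2 ≤ b₂) :
    1 / 4 ≤ partitionFlow c a₁ b₁ a₂ b₂ := by
  set n₁ := a₁ + b₁
  set n₂ := a₂ + b₂
  have hn₂ : 4 ≤ n₂ := by linarith
  have hn₁pos : 0 < n₁ := by linarith
  have hn₂pos : 0 < n₂ := by linarith
  have hn₂' : 0 < n₂ - 1 := by linarith
  have hfirst : 0 ≤ a₁ * b₁ / (n₁ - 1) * (1 / 2 - 1 / n₁) := by
    apply mul_nonneg (div_nonneg (mul_nonneg ha₁ hb₁) (by linarith))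
    rw [sub_nonneg, div_le_div_iff₀ hn₁pos two_pos]
    linarith
  have hmiddle : 2 / n₂ ≤ (a₁ * b₂ + a₂ * b₁) / (n₁ * n₂) := by
    rw [div_le_div_iff₀ hn₂pos (by positivity)]
    nlinarith [mul_nonneg ha₁ (sub_nonneg.2 hb₂), mul_nonneg hb₁ (sub_nonneg.2 ha₂)]
  have hlast : (n₂ - 2) * (n₂ - 4) / (2 * n₂ * (n₂ - 1)) ≤ a₂ * b₂ / (n₂ - 1) * (c - 1 / n₂) :=
    calc (n₂ - 2) * (n₂ - 4) / (2 * n₂ * (n₂ - 1))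
        = 2 * (n₂ - 2) / (n₂ - 1) * (1 / 4 - 1 / n₂) := by field_simp; ring
      _ ≤ a₂ * b₂ / (n₂ - 1) * (c - 1 / n₂) := by
        have hquarter : 0 ≤ 1 / 4 - 1 / n₂ := by
          rw [sub_nonneg, div_le_div_iff₀ hn₂pos four_pos]
          linarith
        gcongr ?_ / _ * ?_
        · nlinarith [mul_nonneg (sub_nonneg.2 ha₂) (sub_nonneg.2 hb₂)]
        · linarith
  have hsum : 1 / 4 ≤ 2 / n₂ + (n₂ - 2) * (n₂ - 4) / (2 * n₂ * (n₂ - 1)) := by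
    rw [div_add_div _ _ hn₂pos.ne' (by positivity), le_div_iff₀ (by positivity)]
    nlinarith [sq_nonneg (n₂ - 3)]
  unfold partitionFlow
  linarith

end PartitionFlow

theorem stmt_3_general (r n1 n2 a1 b1 a2 b2 : ℕ) (hr : 2 ≤ r) (h1 : 2 ≤ n1) (h2 : 2 ≤ n2)
    (hab1 : a1 + b1 = n1)
    (hea : Even a2) (heb : Even b2) (hab2 : a2 + b2 = n2)
    (hI : 2 ≤ a1 + a2) (hJ : 2 ≤ b1 + b2) :
    ((a1 : ℚ) * (b1 : ℚ)) / ((n1 : ℚ) - 1) * (1 / 2 - 1 / (n1 : ℚ))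
      + ((a1 : ℚ) * (b2 : ℚ) + (a2 : ℚ) * (b1 : ℚ)) / ((n1 : ℚ) * (n2 : ℚ))
      + ((a2 : ℚ) * (b2 : ℚ)) / ((n2 : ℚ) - 1) * ((2 * (r : ℚ) + 1) / 16 - 1 / (n2 : ℚ))
      ≥ 1 / 4 := by
  subst hab1 hab2
  push_cast
  change 1 / 4 ≤ partitionFlow ((2 * (r : ℚ) + 1) / 16) a1 b1 a2 b2
  rcases Nat.eq_zero_or_pos a2 with rfl | ha2
  · exact_mod_cast quarter_le_partitionFlow_of_left_eq_zero (by exact_mod_cast hI)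
      (Nat.cast_nonneg b1) (by exact_mod_cast (by omega : 0 < b2))
  rcases Nat.eq_zero_or_pos b2 with rfl | hb2
  · rw [← partitionFlow_swap]
    exact_mod_cast quarter_le_partitionFlow_of_left_eq_zero (by exact_mod_cast hJ)
      (Nat.cast_nonneg a1) (by exact_mod_cast ha2)
  have hc : (1 / 4 : ℚ) ≤ (2 * r + 1) / 16 := by
    have : (2 : ℚ) ≤ r := by exact_mod_cast hr
    linarith
  apply quarter_le_partitionFlow_of_two_le hc (Nat.cast_nonneg a1) (Nat.cast_nonneg b1)
    (by exact_mod_cast h1)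
  · obtain ⟨k, rfl⟩ := hea
    exact_mod_cast (by omega : 2 ≤ k + k)
  · obtain ⟨k, rfl⟩ := heb
    exact_mod_cast (by omega : 2 ≤ k + k)

theorem stmt_3 (r n1 n2 a1 b1 a2 b2 : ℕ) (hr : 2 ≤ r) (h1 : 2 ≤ n1) (h2 : 2 ≤ n2)
    (hev : Even n2)
    (hab1 : a1 + b1 = n1)
    (hea : Even a2) (heb : Even b2) (hab2 : a2 + b2 = n2)
    (hI : 2 ≤ a1 + a2) (hJ : 2 ≤ b1 + b2) :
    ((a1 : ℚ) * (b1 : ℚ)) / ((n1 : ℚ) - 1) * (1 / 2 - 1 / (n1 : ℚ))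
      + ((a1 : ℚ) * (b2 : ℚ) + (a2 : ℚ) * (b1 : ℚ)) / ((n1 : ℚ) * (n2 : ℚ))
      + ((a2 : ℚ) * (b2 : ℚ)) / ((n2 : ℚ) - 1) * ((2 * (r : ℚ) + 1) / 16 - 1 / (n2 : ℚ))
      ≥ 1 / 4 :=
  stmt_3_general r n1 n2 a1 b1 a2 b2 hr h1 h2 hab1 hea heb hab2 hI hJ
end

section
/- Let $r \geq 3$, $n_1 \geq 2$, $n_2 \geq 2$. Let $a_1, b_1 \geq 0$ with $a_1 + b_1 = n_1$, and $a_2, b_2 \geq 0$ with $a_2 + b_2 = n_2$ and $a_2 b_2 = 0$, and assume $a_1 + a_2 \geq 2$ and $b_1 + b_2 \geq 2$. Then $$\frac{a_1 b_1}{n_1 - 1}\left(\frac{1}{2} - \frac{1}{n_1}\right) + \frac{a_2 b_2}{n_2 - 1}\left(\frac{r}{8} - \frac{1}{n_2}\right) + \frac{a_1 b_2 + a_2 b_1}{n_1 n_2} \;\geq\; \frac{1}{2}.$$ -/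
/-!
When all spin weights lie on one side, one of `a₂, b₂` vanishes, so the spin term drops out and
the cross term collapses to `a₁ / n₁` (or `b₁ / n₁`). What remains is an inequality in the
`ω₁`-counts alone which, after clearing denominators and substituting `n = a + b`, reads
`a b (a + b - 2) + (a + b - 1)(a - b) ≥ 0`; it holds because the side free of spin weights
has at least two `ω₁`-labels.
-/

theorem one_half_le_mul_div_mul_add_div {K : Type*} [Field K] [LinearOrder K]
    [IsStrictOrderedRing K] {a b n : K} (hab : a + b = n) (ha : 2 ≤ a) (hb : 0 ≤ b) :
    1 / 2 ≤ a * b / (n - 1) * (1 / 2 - 1 / n) + a / n := by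
  subst hab
  have hn : 0 < a + b := by linarith
  have hn1 : 0 < a + b - 1 := by linarith
  rw [← sub_nonneg]
  have h : a * b / (a + b - 1) * (1 / 2 - 1 / (a + b)) + a / (a + b) - 1 / 2
      = (a * b * (a + b - 2) + (a + b - 1) * (a - b)) / (2 * (a + b) * (a + b - 1)) := by
    field_simp
    ring
  rw [h]
  refine div_nonneg ?_ (by positivity)
  nlinarith [mul_nonneg (mul_nonneg (sub_nonneg.2 ha) hb) hb, mul_nonneg (sub_nonneg.2 ha) hb]

theorem stmt_5_general (r n1 n2 a1 b1 a2 b2 : ℕ) (h2 : 2 ≤ n2)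
    (hab1 : a1 + b1 = n1) (hab2 : a2 + b2 = n2) (hzero : a2 * b2 = 0)
    (hI : 2 ≤ a1 + a2) (hJ : 2 ≤ b1 + b2) :
    ((a1 : ℚ) * (b1 : ℚ)) / ((n1 : ℚ) - 1) * (1 / 2 - 1 / (n1 : ℚ))
      + ((a2 : ℚ) * (b2 : ℚ)) / ((n2 : ℚ) - 1) * ((r : ℚ) / 8 - 1 / (n2 : ℚ))
      + ((a1 : ℚ) * (b2 : ℚ) + (a2 : ℚ) * (b1 : ℚ)) / ((n1 : ℚ) * (n2 : ℚ))
      ≥ 1 / 2 := by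
  have hn2 : (n2 : ℚ) ≠ 0 := by positivity
  have hab1' : (a1 : ℚ) + b1 = n1 := by exact_mod_cast hab1
  rcases Nat.mul_eq_zero.mp hzero with rfl | rfl
  · obtain rfl : b2 = n2 := by omega
    have ha1 : (2 : ℚ) ≤ a1 := by exact_mod_cast (by omega : 2 ≤ a1)
    have key := one_half_le_mul_div_mul_add_div hab1' ha1 (Nat.cast_nonneg b1)
    simpa [mul_div_mul_right _ _ hn2] using key
  · obtain rfl : a2 = n2 := by omega
    have hb1 : (2 : ℚ) ≤ b1 := by exact_mod_cast (by omega : 2 ≤ b1)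
    have key := one_half_le_mul_div_mul_add_div (by linarith) hb1 (Nat.cast_nonneg a1)
    simpa [mul_comm (b1 : ℚ), mul_comm (n1 : ℚ), mul_div_mul_left _ _ hn2] using key

theorem stmt_5 (r n1 n2 a1 b1 a2 b2 : ℕ) (hr : 3 ≤ r) (h1 : 2 ≤ n1) (h2 : 2 ≤ n2)
    (hab1 : a1 + b1 = n1) (hab2 : a2 + b2 = n2) (hzero : a2 * b2 = 0)
    (hI : 2 ≤ a1 + a2) (hJ : 2 ≤ b1 + b2) :
    ((a1 : ℚ) * (b1 : ℚ)) / ((n1 : ℚ) - 1) * (1 / 2 - 1 / (n1 : ℚ))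
      + ((a2 : ℚ) * (b2 : ℚ)) / ((n2 : ℚ) - 1) * ((r : ℚ) / 8 - 1 / (n2 : ℚ))
      + ((a1 : ℚ) * (b2 : ℚ) + (a2 : ℚ) * (b1 : ℚ)) / ((n1 : ℚ) * (n2 : ℚ))
      ≥ 1 / 2 :=
  stmt_5_general r n1 n2 a1 b1 a2 b2 h2 hab1 hab2 hzero hI hJ
end

section
/- Let $r \geq 3$, $n_1 \geq 2$, $n_2 \geq 2$. Let $a_1, b_1 \geq 0$ with $a_1 + b_1 = n_1$, and $a_2, b_2 \geq 1$ with $a_2 + b_2 = n_2$, and assume $a_1 + a_2 \geq 2$ and $b_1 + b_2 \geq 2$. Then $$\frac{a_1 b_1}{n_1 - 1}\left(\frac{1}{2} - \frac{1}{n_1}\right) + \frac{a_2 b_2}{n_2 - 1}\left(\frac{r}{8} - \frac{1}{n_2}\right) + \frac{a_1 b_2 + a_2 b_1}{n_1 n_2} \;\geq\; \frac{r}{8}.$$ -/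
/-!
Write $n = a_1 + b_1$, $m = a_2 + b_2$. The first summand is nonnegative since $n \ge 2$. The
cross term is at least $1/m$, because $a_1 b_2 + a_2 b_1 \ge a_1 + b_1$. The spin term is at least
$r/8 - 1/m$: its factor $a_2 b_2/(m - 1)$ is $\ge 1$, with equality when $a_2 = 1$ or $b_2 = 1$,
and otherwise $m \ge 4$ makes $r/8 - 1/m$ nonnegative. The three bounds add up to $r/8$.
-/

section
variable {K : Type*} [Field K] [LinearOrder K] [IsStrictOrderedRing K]

theorem div_sub_one_mul_half_sub_one_div_nonneg {c n : K} (hc : 0 ≤ c) (hn : 2 ≤ n) :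
    0 ≤ c / (n - 1) * (1 / 2 - 1 / n) := by
  have hn1 : 0 < n - 1 := by linarith
  have hinv : 1 / n ≤ 1 / 2 := one_div_le_one_div_of_le two_pos hn
  exact mul_nonneg (div_nonneg hc hn1.le) (sub_nonneg.2 hinv)

theorem one_div_le_cross_div {x y u v : K} (hx : 0 ≤ x) (hy : 0 ≤ y) (hxy : 0 < x + y)
    (hu : 1 ≤ u) (hv : 1 ≤ v) :
    1 / (u + v) ≤ (x * v + u * y) / ((x + y) * (u + v)) := by
  have huv : 0 < u + v := by linarith
  rw [div_le_div_iff₀ huv (mul_pos hxy huv), one_mul]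
  nlinarith [mul_nonneg hx (sub_nonneg.2 hv), mul_nonneg hy (sub_nonneg.2 hu)]

theorem sub_one_div_le_mul_div_sub_one_mul {c : K} (hc : 1 / 4 ≤ c) {u v : ℕ}
    (hu : 1 ≤ u) (hv : 1 ≤ v) :
    c - 1 / ((u : K) + v) ≤ (u : K) * v / ((u : K) + v - 1) * (c - 1 / ((u : K) + v)) := by
  rcases hu.eq_or_lt with rfl | hu2
  · have : (v : K) ≠ 0 := by positivity
    simp [this]
  rcases hv.eq_or_lt with rfl | hv2
  · have : (u : K) ≠ 0 := by positivity
    simp [this]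
  have hu2 : (2 : K) ≤ u := by exact_mod_cast hu2
  have hv2 : (2 : K) ≤ v := by exact_mod_cast hv2
  have hd : 0 ≤ c - 1 / ((u : K) + v) := by
    rw [sub_nonneg]
    exact (one_div_le_one_div_of_le (by norm_num) (by linarith)).trans hc
  refine le_mul_of_one_le_left hd ?_
  rw [one_le_div (by linarith)]
  nlinarith

end

theorem stmt_6_general (r n1 n2 a1 b1 a2 b2 : ℕ) (hr : 3 ≤ r) (h1 : 2 ≤ n1)
    (hab1 : a1 + b1 = n1) (ha2 : 1 ≤ a2) (hb2 : 1 ≤ b2) (hab2 : a2 + b2 = n2) :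
    ((a1 : ℚ) * (b1 : ℚ)) / ((n1 : ℚ) - 1) * (1 / 2 - 1 / (n1 : ℚ))
      + ((a2 : ℚ) * (b2 : ℚ)) / ((n2 : ℚ) - 1) * ((r : ℚ) / 8 - 1 / (n2 : ℚ))
      + ((a1 : ℚ) * (b2 : ℚ) + (a2 : ℚ) * (b1 : ℚ)) / ((n1 : ℚ) * (n2 : ℚ))
      ≥ (r : ℚ) / 8 := by
  subst hab1 hab2
  push_cast
  have hn : (2 : ℚ) ≤ a1 + b1 := by exact_mod_cast h1
  have hr : (1 / 4 : ℚ) ≤ r / 8 := by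
    have : (3 : ℚ) ≤ r := by exact_mod_cast hr
    linarith
  have hA := div_sub_one_mul_half_sub_one_div_nonneg (by positivity : (0 : ℚ) ≤ a1 * b1) hn
  have hB := sub_one_div_le_mul_div_sub_one_mul hr ha2 hb2
  have hC := one_div_le_cross_div (K := ℚ) a1.cast_nonneg b1.cast_nonneg (by linarith)
    (Nat.one_le_cast.2 ha2) (Nat.one_le_cast.2 hb2)
  linarith

theorem stmt_6 (r n1 n2 a1 b1 a2 b2 : ℕ) (hr : 3 ≤ r) (h1 : 2 ≤ n1) (h2 : 2 ≤ n2)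
    (hab1 : a1 + b1 = n1) (ha2 : 1 ≤ a2) (hb2 : 1 ≤ b2) (hab2 : a2 + b2 = n2)
    (hI : 2 ≤ a1 + a2) (hJ : 2 ≤ b1 + b2) :
    ((a1 : ℚ) * (b1 : ℚ)) / ((n1 : ℚ) - 1) * (1 / 2 - 1 / (n1 : ℚ))
      + ((a2 : ℚ) * (b2 : ℚ)) / ((n2 : ℚ) - 1) * ((r : ℚ) / 8 - 1 / (n2 : ℚ))
      + ((a1 : ℚ) * (b2 : ℚ) + (a2 : ℚ) * (b1 : ℚ)) / ((n1 : ℚ) * (n2 : ℚ))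
      ≥ (r : ℚ) / 8 :=
  stmt_6_general r n1 n2 a1 b1 a2 b2 hr h1 hab1 ha2 hb2 hab2
end
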